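/- arXiv:1706.06638 — 4 statements merged into one kernel-verified Lean document; each statement's English description precedes it below -/
import Mathlib

section
/- Let X be a real-valued random variable on a probability space, let {α_n}_{n≥1} be a nonnegative sequence of real numbers, and let {β_n}_{n≥0} be a nonnegative nondecreasing sequence of real numbers with β_0 = 0 and lim_{n→∞} β_n = ∞. Suppose there exists B > 0 such that β_{n+1} − β_n ≤ B·β_n for all n ≥ 1, and there exists c ≥ 1 such that c^{-1}·α_n ≤ β_n − β_{n−1} ≤ c·α_n for all n ≥ 1. Then c^{-1}·Σ_{n=1}^∞ α_n·P(|X| ≥ β_n) ≤ E(|X|) ≤ β_1 + (B+1)·c·Σ_{n=1}^∞ α_n·P(|X| ≥ β_n), where both sides may equal +∞ and the inequalities are understood in the extended real numbers. -/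
open MeasureTheory Filter
open scoped ENNReal

/-- **Generalized Chung inequality (Theorem 2).**
Let `X` be a real random variable, `α` a nonnegative sequence (indexed from 1),
`β` a nonnegative nondecreasing sequence with `β 0 = 0` and `β n → ∞`.
If `β (n+1) - β n ≤ B * β n` for all `n ≥ 1` (some `B > 0`) and
`c⁻¹ * α n ≤ β n - β (n-1) ≤ c * α n` for all `n ≥ 1` (some `c ≥ 1`), then
`c⁻¹ * ∑ α n * P(|X| ≥ β n) ≤ E|X| ≤ β 1 + (B+1) * c * ∑ α n * P(|X| ≥ β n)`,
with both sides possibly infinite (inequalities in `ℝ≥0∞`). -/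
theorem stmt_0 {Ω : Type*} [MeasurableSpace Ω] (μ : Measure Ω) [IsProbabilityMeasure μ]
    (X : Ω → ℝ) (hX : Measurable X)
    (α : ℕ → ℝ) (hα : ∀ n, 1 ≤ n → 0 ≤ α n)
    (β : ℕ → ℝ) (hβ0 : β 0 = 0) (hβmono : Monotone β) (hβnonneg : ∀ n, 0 ≤ β n)
    (hβtop : Tendsto β atTop atTop)
    (B : ℝ) (hB : 0 < B) (hBβ : ∀ n, 1 ≤ n → β (n + 1) - β n ≤ B * β n)
    (c : ℝ) (hc : 1 ≤ c)
    (hcα : ∀ n : ℕ, c⁻¹ * α (n + 1) ≤ β (n + 1) - β n ∧ β (n + 1) - β n ≤ c * α (n + 1)) :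
    ENNReal.ofReal c⁻¹ *
        (∑' n : ℕ, ENNReal.ofReal (α (n + 1)) * μ {ω | β (n + 1) ≤ |X ω|}) ≤
      ∫⁻ ω, ENNReal.ofReal |X ω| ∂μ ∧
    ∫⁻ ω, ENNReal.ofReal |X ω| ∂μ ≤
      ENNReal.ofReal (β 1) + ENNReal.ofReal ((B + 1) * c) *
        (∑' n : ℕ, ENNReal.ofReal (α (n + 1)) * μ {ω | β (n + 1) ≤ |X ω|}) := by
  classical
  have hSmeas : ∀ k : ℕ, MeasurableSet {ω | β k ≤ |X ω|} := fun k =>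
    measurableSet_le measurable_const hX.abs
  set A : ℕ → Set Ω := fun n => {ω | β n ≤ |X ω|} \ {ω | β (n + 1) ≤ |X ω|} with hAdef
  have hAmeas : ∀ n, MeasurableSet (A n) := fun n => (hSmeas n).diff (hSmeas (n + 1))
  have hAmem : ∀ n ω, ω ∈ A n ↔ β n ≤ |X ω| ∧ |X ω| < β (n + 1) := by
    intro n ω; simp [hAdef, not_le]
  have hdisj : Pairwise (Function.onFun Disjoint A) := by
    intro m n hmn
    wlog h : m < n generalizing m n
    · exact (this hmn.symm (by omega)).symm
    refine Set.disjoint_left.2 fun ω hm hn => ?_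
    have h1 := (hAmem m ω).1 hm
    have h2 := (hAmem n ω).1 hn
    have hle : β (m + 1) ≤ β n := hβmono (by omega)
    linarith [h1.2, h2.1]
  have hcover : ∀ ω (k : ℕ), β k ≤ |X ω| → ∃ n, k ≤ n ∧ ω ∈ A n := by
    intro ω k hk
    have hex : ∃ n, |X ω| < β n := by
      rcases (hβtop.eventually (eventually_gt_atTop (|X ω|))).exists with ⟨n, hn⟩
      exact ⟨n, hn⟩
    have hN : |X ω| < β (Nat.find hex) := Nat.find_spec hex
    have hkN : k < Nat.find hex := by
      by_contra h
      exact absurd (le_trans (hβmono (not_lt.1 h)) hk) (not_le.2 hN)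
    refine ⟨Nat.find hex - 1, by omega, (hAmem _ ω).2 ⟨?_, ?_⟩⟩
    · exact not_lt.1 (Nat.find_min hex (by omega))
    · have h1 : Nat.find hex - 1 + 1 = Nat.find hex := by omega
      rw [h1]; exact hN
  have hSunion : ∀ k : ℕ, {ω | β k ≤ |X ω|} = ⋃ m, A (m + k) := by
    intro k; ext ω
    simp only [Set.mem_iUnion, Set.mem_setOf_eq]
    constructor
    · intro hω
      rcases hcover ω k hω with ⟨n, hn, hωn⟩
      exact ⟨n - k, by rwa [Nat.sub_add_cancel hn]⟩
    · rintro ⟨m, hω⟩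
      exact le_trans (hβmono (by omega : k ≤ m + k)) ((hAmem _ ω).1 hω).1
  have hp : ∀ k : ℕ, μ {ω | β k ≤ |X ω|} = ∑' m, μ (A (m + k)) := by
    intro k
    rw [hSunion k]
    exact measure_iUnion
      (fun i j hij => hdisj (show i + k ≠ j + k by omega)) (fun m => hAmeas _)
  have huniv : (⋃ n, A n) = Set.univ := by
    refine Set.eq_univ_of_forall fun ω => ?_
    rcases hcover ω 0 (by rw [hβ0]; exact abs_nonneg _) with ⟨n, _, hn⟩
    exact Set.mem_iUnion.2 ⟨n, hn⟩
  have hint : ∫⁻ ω, ENNReal.ofReal |X ω| ∂μ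
      = ∑' n, ∫⁻ ω in A n, ENNReal.ofReal |X ω| ∂μ := by
    rw [← lintegral_iUnion hAmeas hdisj, huniv, Measure.restrict_univ]
  have hlow : ∀ n, ENNReal.ofReal (β n) * μ (A n)
      ≤ ∫⁻ ω in A n, ENNReal.ofReal |X ω| ∂μ := by
    intro n
    calc ENNReal.ofReal (β n) * μ (A n)
        = ∫⁻ _ in A n, ENNReal.ofReal (β n) ∂μ := (setLIntegral_const _ _).symm
      _ ≤ ∫⁻ ω in A n, ENNReal.ofReal |X ω| ∂μ :=
          setLIntegral_mono (hX.abs.ennreal_ofReal)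
            (fun ω hω => ENNReal.ofReal_le_ofReal ((hAmem n ω).1 hω).1)
  have hhigh : ∀ n, ∫⁻ ω in A n, ENNReal.ofReal |X ω| ∂μ
      ≤ ENNReal.ofReal (β (n + 1)) * μ (A n) := by
    intro n
    calc ∫⁻ ω in A n, ENNReal.ofReal |X ω| ∂μ
        ≤ ∫⁻ _ in A n, ENNReal.ofReal (β (n + 1)) ∂μ :=
          setLIntegral_mono measurable_const
            (fun ω hω => ENNReal.ofReal_le_ofReal (((hAmem n ω).1 hω).2).le)
      _ = ENNReal.ofReal (β (n + 1)) * μ (A n) := setLIntegral_const _ _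
  set d : ℕ → ℝ≥0∞ := fun k => ENNReal.ofReal (β (k + 1) - β k) with hddef
  have hβsum : ∀ n : ℕ, ENNReal.ofReal (β n) = ∑ k ∈ Finset.range n, d k := by
    intro n
    induction n with
    | zero => simp [hβ0]
    | succ n ih =>
      rw [Finset.sum_range_succ, ← ih, hddef,
        ← ENNReal.ofReal_add (hβnonneg n) (by linarith [hβmono (Nat.le_succ n)])]
      ring_nf
  -- the key swap
  have hpshift : ∀ k : ℕ,
      (∑' n : ℕ, if k < n then μ (A n) else 0) = μ {ω | β (k + 1) ≤ |X ω|} := by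
    intro k
    rw [hp (k + 1)]
    refine (Function.Injective.tsum_eq
      (g := fun m : ℕ => m + (k + 1))
      (f := fun n : ℕ => if k < n then μ (A n) else 0)
      (add_left_injective (k + 1)) ?_).symm.trans (tsum_congr fun m => by
        simp [show k < m + (k + 1) by omega])
    intro n hn
    simp only [Function.mem_support, ne_eq, ite_eq_right_iff, not_forall] at hn
    obtain ⟨hkn, -⟩ := hn
    exact ⟨n - (k + 1), show n - (k + 1) + (k + 1) = n by omega⟩
  have hkey : (∑' n, ENNReal.ofReal (β n) * μ (A n))
      = ∑' k, d k * μ {ω | β (k + 1) ≤ |X ω|} := by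
    have h1 : ∀ n, ENNReal.ofReal (β n) * μ (A n)
        = ∑' k : ℕ, if k < n then d k * μ (A n) else 0 := by
      intro n
      rw [hβsum n, Finset.sum_mul]
      rw [show (∑ k ∈ Finset.range n, d k * μ (A n))
          = ∑ k ∈ Finset.range n, (if k < n then d k * μ (A n) else 0) from
        Finset.sum_congr rfl fun k hk => by simp [Finset.mem_range.1 hk]]
      exact (tsum_eq_sum (fun k hk => by
        simp [Finset.mem_range, not_lt] at hk; simp [not_lt.2 hk])).symm
    calc (∑' n, ENNReal.ofReal (β n) * μ (A n))
        = ∑' (n : ℕ) (k : ℕ), if k < n then d k * μ (A n) else 0 := tsum_congr h1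
      _ = ∑' (k : ℕ) (n : ℕ), if k < n then d k * μ (A n) else 0 := ENNReal.tsum_comm
      _ = ∑' k, d k * ∑' n : ℕ, if k < n then μ (A n) else 0 := by
          refine tsum_congr fun k => ?_
          rw [← ENNReal.tsum_mul_left]
          exact tsum_congr fun n => by split <;> simp
      _ = ∑' k, d k * μ {ω | β (k + 1) ≤ |X ω|} := by
          refine tsum_congr fun k => ?_
          rw [hpshift k]
  -- lower bound
  have hlower : ENNReal.ofReal c⁻¹ *
      (∑' n : ℕ, ENNReal.ofReal (α (n + 1)) * μ {ω | β (n + 1) ≤ |X ω|}) ≤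
      ∫⁻ ω, ENNReal.ofReal |X ω| ∂μ := by
    rw [← ENNReal.tsum_mul_left]
    calc (∑' n : ℕ, ENNReal.ofReal c⁻¹ *
          (ENNReal.ofReal (α (n + 1)) * μ {ω | β (n + 1) ≤ |X ω|}))
        ≤ ∑' k, d k * μ {ω | β (k + 1) ≤ |X ω|} := by
          refine ENNReal.tsum_le_tsum fun k => ?_
          rw [← mul_assoc, ← ENNReal.ofReal_mul (by positivity)]
          exact mul_le_mul_left (ENNReal.ofReal_le_ofReal (hcα k).1) _
      _ = ∑' n, ENNReal.ofReal (β n) * μ (A n) := hkey.symm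
      _ ≤ ∑' n, ∫⁻ ω in A n, ENNReal.ofReal |X ω| ∂μ := ENNReal.tsum_le_tsum hlow
      _ = ∫⁻ ω, ENNReal.ofReal |X ω| ∂μ := hint.symm
  refine ⟨hlower, ?_⟩
  -- upper bound
  have hshift_le : (∑' n, ENNReal.ofReal (β (n + 1)) * μ (A (n + 1)))
      = ∑' n, ENNReal.ofReal (β n) * μ (A n) := by
    rw [tsum_eq_zero_add' ENNReal.summable (f := fun n => ENNReal.ofReal (β n) * μ (A n))]
    simp [hβ0]
  have hkeyc : (∑' k, d k * μ {ω | β (k + 1) ≤ |X ω|})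
      ≤ ENNReal.ofReal c *
        (∑' n : ℕ, ENNReal.ofReal (α (n + 1)) * μ {ω | β (n + 1) ≤ |X ω|}) := by
    rw [← ENNReal.tsum_mul_left]
    refine ENNReal.tsum_le_tsum fun k => ?_
    rw [← mul_assoc, ← ENNReal.ofReal_mul (by linarith)]
    exact mul_le_mul_left (ENNReal.ofReal_le_ofReal (hcα k).2) _
  calc ∫⁻ ω, ENNReal.ofReal |X ω| ∂μ
      = ∑' n, ∫⁻ ω in A n, ENNReal.ofReal |X ω| ∂μ := hint
    _ ≤ ∑' n, ENNReal.ofReal (β (n + 1)) * μ (A n) := ENNReal.tsum_le_tsum hhigh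
    _ = ENNReal.ofReal (β 1) * μ (A 0)
        + ∑' n, ENNReal.ofReal (β (n + 2)) * μ (A (n + 1)) := by
        rw [tsum_eq_zero_add' ENNReal.summable
          (f := fun n => ENNReal.ofReal (β (n + 1)) * μ (A n))]
    _ ≤ ENNReal.ofReal (β 1)
        + ENNReal.ofReal (B + 1) * ∑' n, ENNReal.ofReal (β (n + 1)) * μ (A (n + 1)) := by
        gcongr
        · calc ENNReal.ofReal (β 1) * μ (A 0) ≤ ENNReal.ofReal (β 1) * 1 :=
              mul_le_mul_right prob_le_one _
            _ = ENNReal.ofReal (β 1) := mul_one _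
        · rw [← ENNReal.tsum_mul_left]
          refine ENNReal.tsum_le_tsum fun n => ?_
          rw [← mul_assoc, ← ENNReal.ofReal_mul (by linarith)]
          refine mul_le_mul_left (ENNReal.ofReal_le_ofReal ?_) _
          have := hBβ (n + 1) (by omega)
          nlinarith [hβnonneg (n + 1)]
    _ ≤ ENNReal.ofReal (β 1)
        + ENNReal.ofReal (B + 1) * (ENNReal.ofReal c *
          (∑' n : ℕ, ENNReal.ofReal (α (n + 1)) * μ {ω | β (n + 1) ≤ |X ω|})) := by
        gcongr
        rw [hshift_le, hkey]
        exact hkeyc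
    _ = ENNReal.ofReal (β 1) + ENNReal.ofReal ((B + 1) * c) *
        (∑' n : ℕ, ENNReal.ofReal (α (n + 1)) * μ {ω | β (n + 1) ≤ |X ω|}) := by
        rw [← mul_assoc, ← ENNReal.ofReal_mul (by linarith)]
end

section
/- Let X be a real-valued random variable on a probability space, let {α_n}_{n≥1} be a nonnegative sequence of real numbers, and let {β_n}_{n≥0} be a nonnegative nondecreasing sequence of real numbers with β_0 = 0 and lim_{n→∞} β_n = ∞. Suppose there exists B > 0 such that β_{n+1} − β_n ≤ B·β_n for all n ≥ 1, and there exists c ≥ 1 such that c^{-1}·α_n ≤ β_n − β_{n−1} ≤ c·α_n for all n ≥ 1. Then E(|X|) < ∞ if and only if Σ_{n=1}^∞ α_n·P(|X| ≥ β_n) < ∞. -/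
open MeasureTheory Filter
open scoped ENNReal

/-! The staircase function `S t = β m` for `t ∈ [β m, β (m + 1))` satisfies
`S t ≤ t ≤ (1 + B) S t + β 1` by the growth condition, and writing `S` as the sum of the
increments `β (n + 1) - β n` over `β (n + 1) ≤ t` gives
`E S(|X|) = ∑ (β (n + 1) - β n) P(|X| ≥ β (n + 1))`. Hence `E|X| < ∞` iff this series
converges, and the increments are comparable to `α (n + 1)`. -/

theorem ENNReal.tsum_lt_top_of_le_const_mul {ι : Type*} {a b : ι → ℝ≥0∞} {C : ℝ≥0∞}
    (hC : C ≠ ⊤) (hab : ∀ i, a i ≤ C * b i) (hb : ∑' i, b i < ⊤) : ∑' i, a i < ⊤ :=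
  (ENNReal.tsum_le_tsum hab).trans_lt <| by
    rw [ENNReal.tsum_mul_left]; exact ENNReal.mul_lt_top hC.lt_top hb

theorem exists_le_lt_succ_of_tendsto_atTop {β : ℕ → ℝ} (htop : Tendsto β atTop atTop) {t : ℝ}
    (ht : β 0 ≤ t) : ∃ m, β m ≤ t ∧ t < β (m + 1) := by
  classical
  have hex : ∃ n, t < β n := (htop.eventually_gt_atTop t).exists
  obtain ⟨m, hm⟩ : ∃ m, Nat.find hex = m + 1 :=
    Nat.exists_eq_succ_of_ne_zero fun h => (Nat.find_spec hex).not_ge (h ▸ ht)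
  exact ⟨m, not_lt.1 (Nat.find_min hex (by omega)), hm ▸ Nat.find_spec hex⟩

noncomputable def staircase (β : ℕ → ℝ) (t : ℝ) : ℝ≥0∞ :=
  ∑' n, if β (n + 1) ≤ t then ENNReal.ofReal (β (n + 1) - β n) else 0

theorem lintegral_staircase_comp {Ω : Type*} [MeasurableSpace Ω] (μ : Measure Ω) (β : ℕ → ℝ)
    {g : Ω → ℝ} (hg : Measurable g) :
    ∫⁻ ω, staircase β (g ω) ∂μ =
      ∑' n, ENNReal.ofReal (β (n + 1) - β n) * μ {ω | β (n + 1) ≤ g ω} := by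
  have hmeas : ∀ n, MeasurableSet {ω | β (n + 1) ≤ g ω} :=
    fun n => measurableSet_le measurable_const hg
  have hind : ∀ n ω, (if β (n + 1) ≤ g ω then ENNReal.ofReal (β (n + 1) - β n) else 0) =
      {ω | β (n + 1) ≤ g ω}.indicator (fun _ => ENNReal.ofReal (β (n + 1) - β n)) ω :=
    fun n ω => by simp [Set.indicator_apply]
  simp only [staircase, hind]
  rw [lintegral_tsum fun n => (measurable_const.indicator (hmeas n)).aemeasurable]
  exact tsum_congr fun n => lintegral_indicator_const (hmeas n) _

section Staircase

variable {β : ℕ → ℝ}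

theorem staircase_eq (hmono : Monotone β) (h0 : β 0 = 0) {t : ℝ} {m : ℕ} (hm : β m ≤ t)
    (ht : t < β (m + 1)) : staircase β t = ENNReal.ofReal (β m) := by
  have hzero : ∀ n ∉ Finset.range m,
      (if β (n + 1) ≤ t then ENNReal.ofReal (β (n + 1) - β n) else 0) = 0 := fun n hn =>
    if_neg fun h => ht.not_ge <| (hmono (by simpa using hn)).trans h
  have htelescope : β m = ∑ n ∈ Finset.range m, (β (n + 1) - β n) := by
    rw [Finset.sum_range_sub, h0, sub_zero]
  rw [staircase, tsum_eq_sum hzero, htelescope,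
    ENNReal.ofReal_sum_of_nonneg fun n _ => sub_nonneg.2 (hmono n.le_succ)]
  exact Finset.sum_congr rfl fun n hn =>
    if_pos <| (hmono (Finset.mem_range.1 hn)).trans hm

theorem staircase_le (hmono : Monotone β) (h0 : β 0 = 0) (htop : Tendsto β atTop atTop)
    {t : ℝ} (ht : 0 ≤ t) : staircase β t ≤ ENNReal.ofReal t := by
  obtain ⟨m, hm, hmt⟩ := exists_le_lt_succ_of_tendsto_atTop htop (h0 ▸ ht)
  rw [staircase_eq hmono h0 hm hmt]
  exact ENNReal.ofReal_le_ofReal hm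

theorem le_staircase (hmono : Monotone β) (h0 : β 0 = 0) (htop : Tendsto β atTop atTop)
    {B : ℝ} (hB : 0 ≤ B) (hgrowth : ∀ n, 1 ≤ n → β (n + 1) - β n ≤ B * β n) {t : ℝ}
    (ht : 0 ≤ t) :
    ENNReal.ofReal t ≤ ENNReal.ofReal (1 + B) * staircase β t + ENNReal.ofReal (β 1) := by
  obtain ⟨m, hm, hmt⟩ := exists_le_lt_succ_of_tendsto_atTop htop (h0 ▸ ht)
  have hnonneg : ∀ n, 0 ≤ β n := fun n => h0 ▸ hmono n.zero_le
  rw [staircase_eq hmono h0 hm hmt, ← ENNReal.ofReal_mul (by linarith),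
    ← ENNReal.ofReal_add (by nlinarith [hnonneg m]) (hnonneg 1)]
  refine ENNReal.ofReal_le_ofReal (hmt.le.trans ?_)
  rcases m with _ | k
  · simp [h0]
  · nlinarith [hgrowth (k + 1) (by omega), hnonneg (k + 1), hnonneg 1]

end Staircase

theorem stmt_1_general {Ω : Type*} [MeasurableSpace Ω] (μ : Measure Ω) [IsProbabilityMeasure μ]
    (X : Ω → ℝ) (hX : Measurable X)
    (α : ℕ → ℝ)
    (β : ℕ → ℝ) (hβ0 : β 0 = 0) (hβmono : Monotone β)
    (hβtop : Tendsto β atTop atTop)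
    (hBβ : ∃ B : ℝ, 0 < B ∧ ∀ n, 1 ≤ n → β (n + 1) - β n ≤ B * β n)
    (hcα : ∃ c : ℝ, 1 ≤ c ∧
      ∀ n : ℕ, c⁻¹ * α (n + 1) ≤ β (n + 1) - β n ∧ β (n + 1) - β n ≤ c * α (n + 1)) :
    (∫⁻ ω, ENNReal.ofReal |X ω| ∂μ < ⊤) ↔
      (∑' n : ℕ, ENNReal.ofReal (α (n + 1)) * μ {ω | β (n + 1) ≤ |X ω|}) < ⊤ := by
  obtain ⟨B, hB, hgrowth⟩ := hBβ
  obtain ⟨c, hc, hcomp⟩ := hcα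
  have hc0 : 0 < c := one_pos.trans_le hc
  have hseries : (∑' n, ENNReal.ofReal (β (n + 1) - β n) * μ {ω | β (n + 1) ≤ |X ω|}) < ⊤ ↔
      (∑' n, ENNReal.ofReal (α (n + 1)) * μ {ω | β (n + 1) ≤ |X ω|}) < ⊤ := by
    constructor <;> refine ENNReal.tsum_lt_top_of_le_const_mul (C := ENNReal.ofReal c)
      ENNReal.ofReal_ne_top fun n => ?_ <;>
      rw [← mul_assoc, ← ENNReal.ofReal_mul hc0.le] <;> gcongr
    exacts [(inv_mul_le_iff₀ hc0).1 (hcomp n).1, (hcomp n).2]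
  rw [← hseries, ← lintegral_staircase_comp μ β hX.abs]
  constructor
  · exact (lintegral_mono fun ω => staircase_le hβmono hβ0 hβtop (abs_nonneg (X ω))).trans_lt
  · intro hfin
    calc ∫⁻ ω, ENNReal.ofReal |X ω| ∂μ
        ≤ ∫⁻ ω, ENNReal.ofReal (1 + B) * staircase β |X ω| + ENNReal.ofReal (β 1) ∂μ :=
          lintegral_mono fun ω => le_staircase hβmono hβ0 hβtop hB.le hgrowth (abs_nonneg _)
      _ = ENNReal.ofReal (1 + B) * ∫⁻ ω, staircase β |X ω| ∂μ + ENNReal.ofReal (β 1) := by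
          rw [lintegral_add_right _ measurable_const, lintegral_const_mul' _ _ ENNReal.ofReal_ne_top,
            lintegral_const, measure_univ, mul_one]
      _ < ⊤ := by finiteness

/-- **Moment/series criterion (Theorem 2, second part).**
Under the assumptions of the generalized Chung inequality,
`E|X| < ∞` if and only if `∑_{n≥1} α n * P(|X| ≥ β n) < ∞`. -/
theorem stmt_1 {Ω : Type*} [MeasurableSpace Ω] (μ : Measure Ω) [IsProbabilityMeasure μ]
    (X : Ω → ℝ) (hX : Measurable X)
    (α : ℕ → ℝ) (hα : ∀ n, 1 ≤ n → 0 ≤ α n)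
    (β : ℕ → ℝ) (hβ0 : β 0 = 0) (hβmono : Monotone β) (hβnonneg : ∀ n, 0 ≤ β n)
    (hβtop : Tendsto β atTop atTop)
    (hBβ : ∃ B : ℝ, 0 < B ∧ ∀ n, 1 ≤ n → β (n + 1) - β n ≤ B * β n)
    (hcα : ∃ c : ℝ, 1 ≤ c ∧
      ∀ n : ℕ, c⁻¹ * α (n + 1) ≤ β (n + 1) - β n ∧ β (n + 1) - β n ≤ c * α (n + 1)) :
    (∫⁻ ω, ENNReal.ofReal |X ω| ∂μ < ⊤) ↔
      (∑' n : ℕ, ENNReal.ofReal (α (n + 1)) * μ {ω | β (n + 1) ≤ |X ω|}) < ⊤ :=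
  stmt_1_general μ X hX α β hβ0 hβmono hβtop hBβ hcα
end

section
/- Let α > 0 and β > 0 be real numbers, and let {α_n}_{n≥1} and {β_n}_{n≥1} be nonnegative sequences of real numbers such that α_n/n^α and β_n/n^β are bounded away from 0 and from ∞ (i.e., there exists a > 1 with a^{-1} < α_n/n^α < a and a^{-1} < β_n/n^β < a for all n ≥ 1). Then for any real-valued random variable X, Σ_{n=1}^∞ α_n·P(|X| > β_n) < ∞ if and only if E(|X|^{(α+1)/β}) < ∞. -/
open MeasureTheory
open scoped ENNReal

open Set in
private lemma ioi_eq_iUnion : Ioi (0:ℝ) = ⋃ n : ℕ, Ioc (n:ℝ) ((n:ℝ)+1) := by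
  ext t
  simp only [mem_Ioi, mem_iUnion, mem_Ioc]
  constructor
  · intro ht
    have h1 : 1 ≤ ⌈t⌉₊ := Nat.one_le_ceil_iff.mpr ht
    refine ⟨⌈t⌉₊ - 1, ?_, ?_⟩
    · exact_mod_cast Nat.lt_ceil.mp (by omega)
    · have hcast : ((⌈t⌉₊ - 1 : ℕ):ℝ) + 1 = (⌈t⌉₊:ℝ) := by
        have : (⌈t⌉₊ - 1) + 1 = ⌈t⌉₊ := by omega
        exact_mod_cast this
      rw [hcast]; exact Nat.le_ceil t
  · rintro ⟨n, hn, -⟩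
    exact lt_of_le_of_lt (by positivity) hn

private lemma ofReal_nat_succ (n : ℕ) : ENNReal.ofReal ((n:ℝ)+1) = (n:ℝ≥0∞)+1 := by
  rw [show ((n:ℝ)+1) = ((n+1:ℕ):ℝ) by push_cast; ring, ENNReal.ofReal_natCast]
  push_cast; ring

private lemma ofReal_nat_succ_rpow (n : ℕ) (r : ℝ) :
    ENNReal.ofReal (((n:ℝ)+1) ^ r) = ((n:ℝ≥0∞)+1) ^ r := by
  rw [← ENNReal.ofReal_rpow_of_pos (by positivity), ofReal_nat_succ]

private lemma two_mul_aux (x : ℝ≥0∞) : x + 1 + 1 ≤ 2 * (x + 1) := by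
  rw [two_mul]; exact add_le_add le_rfl le_add_self

open Set in
set_option maxHeartbeats 2000000 in
private lemma key_lemma {Ω : Type*} [MeasurableSpace Ω] (μ : Measure Ω) [IsProbabilityMeasure μ]
    (h : Ω → ℝ) (hm : Measurable h) (h0 : ∀ ω, 0 ≤ h ω) (q : ℝ) (hq : 1 < q) :
    (∑' n : ℕ, ((n : ℝ≥0∞) + 1) ^ (q - 1) * μ {ω | (n : ℝ) + 1 < h ω}) < ⊤ ↔
      (∫⁻ ω, ENNReal.ofReal (h ω ^ q) ∂μ) < ⊤ := by
  have hq0 : 0 < q := by linarith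
  have hq1 : (0:ℝ) ≤ q - 1 := by linarith
  set I : ℕ → ℝ≥0∞ := fun n =>
    ∫⁻ t in Ioc (n:ℝ) ((n:ℝ)+1), μ {ω | t < h ω} * ENNReal.ofReal (t ^ (q-1)) with hI
  set S : ℝ≥0∞ := ∑' n : ℕ, ((n : ℝ≥0∞) + 1) ^ (q - 1) * μ {ω | (n : ℝ) + 1 < h ω} with hS
  have htwo : (2:ℝ≥0∞) ^ (q-1) ≠ ⊤ :=
    (ENNReal.rpow_lt_top_of_nonneg hq1 (by norm_num)).ne
  -- layer cake
  have hlayer : (∫⁻ ω, ENNReal.ofReal (h ω ^ q) ∂μ) = ENNReal.ofReal q * ∑' n, I n := by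
    rw [lintegral_rpow_eq_lintegral_meas_lt_mul μ (Filter.Eventually.of_forall h0)
      hm.aemeasurable hq0]
    congr 1
    rw [ioi_eq_iUnion, lintegral_iUnion (fun n => measurableSet_Ioc)]
    intro i j hij
    simp only [Function.onFun]
    rw [Set.Ioc_disjoint_Ioc]
    rcases lt_or_gt_of_ne hij with hlt | hlt
    · refine le_trans (min_le_left _ _) (le_trans ?_ (le_max_right _ _))
      exact_mod_cast Nat.succ_le_of_lt hlt
    · refine le_trans (min_le_right _ _) (le_trans ?_ (le_max_left _ _))
      exact_mod_cast Nat.succ_le_of_lt hlt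
  -- upper bound on I n
  have hIub : ∀ n : ℕ, I n ≤ ((n:ℝ≥0∞)+1)^(q-1) * μ {ω | (n:ℝ) < h ω} := by
    intro n
    have hmono : I n ≤ ∫⁻ _ in Ioc (n:ℝ) ((n:ℝ)+1),
        μ {ω | (n:ℝ) < h ω} * ENNReal.ofReal (((n:ℝ)+1) ^ (q-1)) := by
      apply setLIntegral_mono' measurableSet_Ioc
      intro t ht
      exact mul_le_mul' (measure_mono fun ω hω => lt_trans ht.1 hω)
        (ENNReal.ofReal_le_ofReal
          (Real.rpow_le_rpow (le_trans (by positivity) ht.1.le) ht.2 hq1))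
    rw [setLIntegral_const, Real.volume_Ioc] at hmono
    simp only [add_sub_cancel_left, ENNReal.ofReal_one, mul_one] at hmono
    calc I n ≤ _ := hmono
      _ = ((n:ℝ≥0∞)+1)^(q-1) * μ {ω | (n:ℝ) < h ω} := by
        rw [ofReal_nat_succ_rpow]; ring
  -- lower bound on I n
  have hIlb : ∀ n : ℕ, (n:ℝ≥0∞)^(q-1) * μ {ω | (n:ℝ)+1 < h ω} ≤ I n := by
    intro n
    have hmono : (∫⁻ _ in Ioc (n:ℝ) ((n:ℝ)+1),
        μ {ω | (n:ℝ)+1 < h ω} * ENNReal.ofReal ((n:ℝ) ^ (q-1))) ≤ I n := by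
      apply setLIntegral_mono' measurableSet_Ioc
      intro t ht
      exact mul_le_mul' (measure_mono fun ω hω => lt_of_le_of_lt ht.2 hω)
        (ENNReal.ofReal_le_ofReal (Real.rpow_le_rpow (by positivity) ht.1.le hq1))
    rw [setLIntegral_const, Real.volume_Ioc] at hmono
    simp only [add_sub_cancel_left, ENNReal.ofReal_one, mul_one] at hmono
    calc (n:ℝ≥0∞)^(q-1) * μ {ω | (n:ℝ)+1 < h ω}
        = μ {ω | (n:ℝ)+1 < h ω} * ENNReal.ofReal ((n:ℝ) ^ (q-1)) := by
          rw [← ENNReal.ofReal_rpow_of_nonneg (Nat.cast_nonneg n) hq1,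
            ENNReal.ofReal_natCast]; ring
      _ ≤ I n := hmono
  -- S ≤ 1 + 2^(q-1) * ∑ I
  have hSle : S ≤ 1 + (2:ℝ≥0∞)^(q-1) * ∑' n, I n := by
    rw [hS, tsum_eq_zero_add' ENNReal.summable]
    apply add_le_add
    · simpa using prob_le_one
    · calc (∑' n : ℕ, (((n+1:ℕ) : ℝ≥0∞) + 1) ^ (q - 1) * μ {ω | ((n+1:ℕ) : ℝ) + 1 < h ω})
          ≤ ∑' n : ℕ, (2:ℝ≥0∞)^(q-1) * I (n+1) := by
            apply ENNReal.tsum_le_tsum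
            intro n
            calc (((n+1:ℕ) : ℝ≥0∞) + 1) ^ (q - 1) * μ {ω | ((n+1:ℕ) : ℝ) + 1 < h ω}
                ≤ ((2:ℝ≥0∞) * ((n+1:ℕ) : ℝ≥0∞)) ^ (q - 1)
                    * μ {ω | ((n+1:ℕ) : ℝ) + 1 < h ω} := by
                  refine mul_le_mul' (ENNReal.rpow_le_rpow ?_ hq1) le_rfl
                  push_cast
                  exact two_mul_aux _
              _ = (2:ℝ≥0∞)^(q-1)
                    * (((n+1:ℕ) : ℝ≥0∞)^(q-1) * μ {ω | ((n+1:ℕ) : ℝ) + 1 < h ω}) := by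
                  rw [ENNReal.mul_rpow_of_nonneg _ _ hq1]; ring
              _ ≤ (2:ℝ≥0∞)^(q-1) * I (n+1) := mul_le_mul' le_rfl (hIlb (n+1))
        _ = (2:ℝ≥0∞)^(q-1) * ∑' n : ℕ, I (n+1) := ENNReal.tsum_mul_left
        _ ≤ (2:ℝ≥0∞)^(q-1) * ∑' n, I n := by
            refine mul_le_mul' le_rfl ?_
            conv_rhs => rw [tsum_eq_zero_add' ENNReal.summable]
            exact le_add_self
  -- ∑ I ≤ 1 + 2^(q-1) * S
  have hTle : (∑' n, I n) ≤ 1 + (2:ℝ≥0∞)^(q-1) * S := by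
    rw [tsum_eq_zero_add' ENNReal.summable]
    apply add_le_add
    · calc I 0 ≤ (((0:ℕ):ℝ≥0∞)+1)^(q-1) * μ {ω | ((0:ℕ):ℝ) < h ω} := hIub 0
        _ ≤ 1 := by
          simp only [Nat.cast_zero, zero_add, ENNReal.one_rpow, one_mul]
          exact prob_le_one
    · calc (∑' n : ℕ, I (n+1))
          ≤ ∑' n : ℕ, (2:ℝ≥0∞)^(q-1)
              * (((n : ℝ≥0∞) + 1) ^ (q - 1) * μ {ω | (n : ℝ) + 1 < h ω}) := by
            apply ENNReal.tsum_le_tsum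
            intro n
            calc I (n+1) ≤ (((n+1:ℕ):ℝ≥0∞)+1)^(q-1) * μ {ω | ((n+1:ℕ):ℝ) < h ω} := hIub (n+1)
              _ ≤ ((2:ℝ≥0∞) * ((n:ℝ≥0∞)+1))^(q-1) * μ {ω | (n:ℝ)+1 < h ω} := by
                  push_cast
                  exact mul_le_mul' (ENNReal.rpow_le_rpow (two_mul_aux _) hq1) le_rfl
              _ = (2:ℝ≥0∞)^(q-1)
                    * (((n : ℝ≥0∞) + 1) ^ (q - 1) * μ {ω | (n : ℝ) + 1 < h ω}) := by
                  rw [ENNReal.mul_rpow_of_nonneg _ _ hq1]; ring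
        _ = (2:ℝ≥0∞)^(q-1) * S := ENNReal.tsum_mul_left
  constructor
  · intro hfin
    rw [hlayer]
    apply ENNReal.mul_lt_top ENNReal.ofReal_lt_top
    calc (∑' n, I n) ≤ 1 + (2:ℝ≥0∞)^(q-1) * S := hTle
      _ < ⊤ := ENNReal.add_lt_top.mpr
          ⟨ENNReal.one_lt_top, ENNReal.mul_lt_top htwo.lt_top hfin⟩
  · intro hfin
    rw [hlayer] at hfin
    have hT : (∑' n, I n) < ⊤ := by
      by_contra hcon
      push_neg at hcon
      rw [top_le_iff.mp hcon, ENNReal.mul_top (ENNReal.ofReal_pos.mpr hq0).ne'] at hfin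
      exact (lt_irrefl _ hfin).elim
    calc S ≤ 1 + (2:ℝ≥0∞)^(q-1) * ∑' n, I n := hSle
      _ < ⊤ := ENNReal.add_lt_top.mpr
          ⟨ENNReal.one_lt_top, ENNReal.mul_lt_top htwo.lt_top hT⟩

private lemma transfer {Ω : Type*} [MeasurableSpace Ω] (μ : Measure Ω) [IsProbabilityMeasure μ]
    (X : Ω → ℝ) (hX : Measurable X) (α β c : ℝ) (hα : 0 < α) (hβ : 0 < β) (hc : 0 < c) :
    (∑' n : ℕ, ((n : ℝ≥0∞) + 1) ^ α * μ {ω | c * ((n:ℝ)+1) ^ β < |X ω|}) < ⊤ ↔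
      (∫⁻ ω, ENNReal.ofReal (|X ω| ^ ((α + 1) / β)) ∂μ) < ⊤ := by
  set h : Ω → ℝ := fun ω => (|X ω| / c) ^ β⁻¹ with hh
  have hm : Measurable h := by fun_prop
  have h0 : ∀ ω, 0 ≤ h ω := fun ω => Real.rpow_nonneg (by positivity) _
  have hsets : ∀ n : ℕ, {ω | (n:ℝ)+1 < h ω} = {ω | c * ((n:ℝ)+1)^β < |X ω|} := by
    intro n
    ext ω
    simp only [Set.mem_setOf_eq, hh]
    rw [Real.lt_rpow_inv_iff_of_pos (by positivity) (by positivity) hβ, lt_div_iff₀ hc, mul_comm]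
  have hpow : ∀ ω, |X ω| ^ ((α+1)/β) = c ^ ((α+1)/β) * h ω ^ (α+1) := by
    intro ω
    simp only [hh]
    calc |X ω| ^ ((α+1)/β)
        = (c * (|X ω| / c)) ^ ((α+1)/β) := by
          rw [mul_comm, div_mul_cancel₀ _ hc.ne']
      _ = c ^ ((α+1)/β) * (|X ω|/c) ^ ((α+1)/β) := Real.mul_rpow hc.le (by positivity)
      _ = c ^ ((α+1)/β) * ((|X ω|/c) ^ β⁻¹) ^ (α+1) := by
          rw [← Real.rpow_mul (by positivity), inv_mul_eq_div]
  have hint : (∫⁻ ω, ENNReal.ofReal (|X ω| ^ ((α+1)/β)) ∂μ)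
      = ENNReal.ofReal (c ^ ((α+1)/β)) * ∫⁻ ω, ENNReal.ofReal (h ω ^ (α+1)) ∂μ := by
    rw [← lintegral_const_mul' _ _ ENNReal.ofReal_ne_top]
    apply lintegral_congr
    intro ω
    rw [hpow ω, ENNReal.ofReal_mul (by positivity)]
  have hkey := key_lemma μ h hm h0 (α+1) (by linarith)
  simp only [add_sub_cancel_right, hsets] at hkey
  rw [hkey, hint]
  have hcp : (0:ℝ≥0∞) < ENNReal.ofReal (c ^ ((α+1)/β)) := ENNReal.ofReal_pos.mpr (by positivity)
  constructor
  · intro hJ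
    exact ENNReal.mul_lt_top ENNReal.ofReal_lt_top hJ
  · intro hprod
    by_contra hcon
    push_neg at hcon
    rw [top_le_iff.mp hcon, ENNReal.mul_top hcp.ne'] at hprod
    exact (lt_irrefl _ hprod).elim

/-- **Corollary 2.** Let `α, β > 0` and let `A n` (resp. `B n`) be nonnegative sequences
(indexed from `1`) with `A n / n^α` and `B n / n^β` bounded away from `0` and `∞`
(there is `a > 1` with `a⁻¹ < A n / n^α < a` and `a⁻¹ < B n / n^β < a` for all `n ≥ 1`).
Then for a real random variable `X`,
`∑_{n≥1} A n * P(|X| > B n) < ∞` iff `E(|X|^((α+1)/β)) < ∞`. -/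
theorem stmt_3 {Ω : Type*} [MeasurableSpace Ω] (μ : Measure Ω) [IsProbabilityMeasure μ]
    (X : Ω → ℝ) (hX : Measurable X) (α β : ℝ) (hα : 0 < α) (hβ : 0 < β)
    (A B : ℕ → ℝ) (hA0 : ∀ n, 1 ≤ n → 0 ≤ A n) (hB0 : ∀ n, 1 ≤ n → 0 ≤ B n)
    (a : ℝ) (ha : 1 < a)
    (hA : ∀ n : ℕ, 1 ≤ n → a⁻¹ < A n / (n : ℝ) ^ α ∧ A n / (n : ℝ) ^ α < a)
    (hB : ∀ n : ℕ, 1 ≤ n → a⁻¹ < B n / (n : ℝ) ^ β ∧ B n / (n : ℝ) ^ β < a) :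
    (∑' n : ℕ, ENNReal.ofReal (A (n + 1)) * μ {ω | B (n + 1) < |X ω|}) < ⊤ ↔
      (∫⁻ ω, ENNReal.ofReal (|X ω| ^ ((α + 1) / β)) ∂μ) < ⊤ := by
  have ha0 : (0:ℝ) < a := lt_trans one_pos ha
  have hai : (0:ℝ) < a⁻¹ := inv_pos.mpr ha0
  have hAu : ∀ n : ℕ, A (n+1) < a * ((n:ℝ)+1)^α := by
    intro n
    have h := (hA (n+1) (by omega)).2
    push_cast at h
    rw [div_lt_iff₀ (by positivity)] at h
    linarith
  have hAl : ∀ n : ℕ, ((n:ℝ)+1)^α < a * A (n+1) := by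
    intro n
    have h := (hA (n+1) (by omega)).1
    push_cast at h
    rw [lt_div_iff₀ (by positivity)] at h
    calc ((n:ℝ)+1)^α = a * (a⁻¹ * ((n:ℝ)+1)^α) := by field_simp
      _ < a * A (n+1) := mul_lt_mul_of_pos_left h ha0
  have hBu : ∀ n : ℕ, B (n+1) < a * ((n:ℝ)+1)^β := by
    intro n
    have h := (hB (n+1) (by omega)).2
    push_cast at h
    rw [div_lt_iff₀ (by positivity)] at h
    linarith
  have hBl : ∀ n : ℕ, a⁻¹ * ((n:ℝ)+1)^β < B (n+1) := by
    intro n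
    have h := (hB (n+1) (by omega)).1
    push_cast at h
    rw [lt_div_iff₀ (by positivity)] at h
    exact h
  constructor
  · intro hsum
    apply (transfer μ X hX α β a hα hβ ha0).mp
    calc (∑' n : ℕ, ((n : ℝ≥0∞) + 1) ^ α * μ {ω | a * ((n:ℝ)+1) ^ β < |X ω|})
        ≤ ∑' n : ℕ, ENNReal.ofReal a
            * (ENNReal.ofReal (A (n+1)) * μ {ω | B (n + 1) < |X ω|}) := by
          apply ENNReal.tsum_le_tsum
          intro n
          calc ((n : ℝ≥0∞) + 1) ^ α * μ {ω | a * ((n:ℝ)+1) ^ β < |X ω|}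
              ≤ (ENNReal.ofReal a * ENNReal.ofReal (A (n+1)))
                  * μ {ω | B (n + 1) < |X ω|} := by
                apply mul_le_mul'
                · rw [← ofReal_nat_succ_rpow, ← ENNReal.ofReal_mul ha0.le]
                  exact ENNReal.ofReal_le_ofReal (hAl n).le
                · exact measure_mono fun ω hω => lt_trans (hBu n) hω
            _ = _ := by ring
      _ = ENNReal.ofReal a
            * ∑' n : ℕ, ENNReal.ofReal (A (n+1)) * μ {ω | B (n + 1) < |X ω|} :=
          ENNReal.tsum_mul_left
      _ < ⊤ := ENNReal.mul_lt_top ENNReal.ofReal_lt_top hsum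
  · intro hint
    have hS := (transfer μ X hX α β a⁻¹ hα hβ hai).mpr hint
    calc (∑' n : ℕ, ENNReal.ofReal (A (n + 1)) * μ {ω | B (n + 1) < |X ω|})
        ≤ ∑' n : ℕ, ENNReal.ofReal a
            * (((n : ℝ≥0∞) + 1) ^ α * μ {ω | a⁻¹ * ((n:ℝ)+1) ^ β < |X ω|}) := by
          apply ENNReal.tsum_le_tsum
          intro n
          calc ENNReal.ofReal (A (n + 1)) * μ {ω | B (n + 1) < |X ω|}
              ≤ (ENNReal.ofReal a * ((n : ℝ≥0∞) + 1) ^ α)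
                  * μ {ω | a⁻¹ * ((n:ℝ)+1) ^ β < |X ω|} := by
                apply mul_le_mul'
                · rw [← ofReal_nat_succ_rpow, ← ENNReal.ofReal_mul ha0.le]
                  exact ENNReal.ofReal_le_ofReal (hAu n).le
                · exact measure_mono fun ω hω => lt_trans (hBl n) hω
            _ = _ := by ring
      _ = ENNReal.ofReal a
            * ∑' n : ℕ, ((n : ℝ≥0∞) + 1) ^ α * μ {ω | a⁻¹ * ((n:ℝ)+1) ^ β < |X ω|} :=
          ENNReal.tsum_mul_left
      _ < ⊤ := ENNReal.mul_lt_top ENNReal.ofReal_lt_top hS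
end

section
/- Let m be a fixed positive integer and suppose that Σ_{n=m}^∞ P(max_{1≤i_1<i_2<⋯<i_m≤n} ∏_{h=1}^m |X_{1,i_h}| ≥ √(n·ln n)) < ∞. Then E(|X_{1,1}|^β) < ∞ for every real number β with 0 ≤ β < 2(m+1). -/
open MeasureTheory ProbabilityTheory
open scoped ENNReal

/-- The maximum, over all strictly increasing `m`-tuples of indices taken from the first
`n` indices, of the product of the corresponding absolute values `|X i ω|`.
(Indices are zero-based: `X i` plays the role of `X_{1,i+1}`.) -/
noncomputable def maxProdAbs {Ω : Type*} (X : ℕ → Ω → ℝ) (m n : ℕ) (ω : Ω) : ℝ :=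
  sSup ((fun s : Finset ℕ => ∏ i ∈ s, |X i ω|) ''
    {s : Finset ℕ | s.card = m ∧ s ⊆ Finset.range n})

/-!
Let `p = P(|X₀| ≥ t)` and let `g j` be the `j`-th term of the series. If `t ^ m ≥ √(j ln j)`
for all `j ≤ 2n`, then for `k ≤ j ≤ 2n` the event that exactly `m` of `X₀, …, X_{k-1}` exceed
`t` in absolute value forces the maximal product of `X₀, …, X_{j-1}` above `√(j ln j)`, so
`C(k,m) pᵐ (1-p)^(k-m) ≤ g j`. As `g j → 0`, the choice `k = ⌊1/(2p)⌋` rules out `2np > 1/2`;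
then `k = j` gives `(jp)ᵐ ≲ g j` for `n < j ≤ 2n`, and summing, `n (np)ᵐ ≲ ∑ g < ∞`, i.e.
`p ≲ n^(-(m+1)/m)`. With `n ≈ t^(2m/(1+ε))` this is `P(|X₀| ≥ t) = O(t^(-ρ))` for every
`ρ < 2(m+1)`, and the layer-cake formula turns the tail bound into `E|X₀|^β < ∞` for `β < ρ`.
-/

open Filter Finset Real Topology
open scoped Nat

lemma le_maxProdAbs {Ω : Type*} (X : ℕ → Ω → ℝ) {m n : ℕ} {s : Finset ℕ} (hs : #s = m)
    (hsn : s ⊆ range n) (ω : Ω) : ∏ i ∈ s, |X i ω| ≤ maxProdAbs X m n ω := by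
  refine le_csSup (Set.Finite.bddAbove (Set.Finite.image _ ?_)) ⟨s, ⟨hs, hsn⟩, rfl⟩
  exact (range n).powerset.finite_toSet.subset fun t ht => mem_powerset.2 ht.2

section IID

variable {Ω : Type*} [MeasurableSpace Ω] {μ : Measure Ω} {X : ℕ → Ω → ℝ}

lemma measurableSet_setOf_mem_iff {A : Set ℝ} (hA : MeasurableSet A) (p : Prop) :
    MeasurableSet {x | x ∈ A ↔ p} := by
  by_cases hp : p
  · convert hA using 1
    simp [hp]
  · convert hA.compl using 1
    ext
    simp [hp]

lemma measureReal_biInter_preimage_mem_iff_mem (hindep : iIndepFun X μ)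
    (hident : ∀ i, IdentDistrib (X i) (X 0) μ μ) {A : Set ℝ} (hA : MeasurableSet A)
    {k : ℕ} {s : Finset ℕ} (hs : s ⊆ range k) :
    μ.real (⋂ i ∈ range k, X i ⁻¹' {x | x ∈ A ↔ i ∈ s}) =
      μ.real (X 0 ⁻¹' A) ^ #s * μ.real (X 0 ⁻¹' Aᶜ) ^ (k - #s) := by
  rw [measureReal_def, hindep.meas_biInter fun i _ => ⟨_, measurableSet_setOf_mem_iff hA _, rfl⟩,
    ENNReal.toReal_prod, ← prod_sdiff hs, mul_comm]
  have hin : ∀ i ∈ s, (μ (X i ⁻¹' {x | x ∈ A ↔ i ∈ s})).toReal = μ.real (X 0 ⁻¹' A) :=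
    fun i hi => by
      simp only [hi, iff_true, Set.ofPred_mem_eq]
      exact congrArg ENNReal.toReal ((hident i).measure_mem_eq hA)
  have hout : ∀ i ∈ range k \ s,
      (μ (X i ⁻¹' {x | x ∈ A ↔ i ∈ s})).toReal = μ.real (X 0 ⁻¹' Aᶜ) := fun i hi => by
    simp only [(mem_sdiff.1 hi).2, iff_false]
    exact congrArg ENNReal.toReal ((hident i).measure_mem_eq hA.compl)
  rw [prod_congr rfl hin, prod_congr rfl hout, prod_const, prod_const, card_sdiff_of_subset hs,
    card_range]

variable [IsProbabilityMeasure μ]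

lemma choose_mul_pow_le_measureReal_maxProdAbs (hmeas : ∀ i, Measurable (X i))
    (hindep : iIndepFun X μ) (hident : ∀ i, IdentDistrib (X i) (X 0) μ μ) {a : ℝ} (ha : 0 ≤ a)
    {m k n : ℕ} (hkn : k ≤ n) :
    k.choose m * μ.real {ω | a ≤ |X 0 ω|} ^ m * (1 - μ.real {ω | a ≤ |X 0 ω|}) ^ (k - m) ≤
      μ.real {ω | a ^ m ≤ maxProdAbs X m n ω} := by
  set A : Set ℝ := {x | a ≤ |x|}
  have hA : MeasurableSet A := measurableSet_le measurable_const measurable_abs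
  set E : Finset ℕ → Set Ω := fun s => ⋂ i ∈ range k, X i ⁻¹' {x | x ∈ A ↔ i ∈ s}
  have hE : ∀ s, MeasurableSet (E s) := fun s =>
    .biInter (range k).countable_toSet fun i _ => hmeas i (measurableSet_setOf_mem_iff hA _)
  have hdisj : (powersetCard m (range k) : Set (Finset ℕ)).PairwiseDisjoint E := by
    intro s hs t ht hst
    refine Set.disjoint_left.2 fun ω hωs hωt => hst ?_
    simp only [E, Set.mem_iInter, Set.mem_preimage, Set.mem_ofPred_eq] at hωs hωt
    have hsk := (mem_powersetCard.1 hs).1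
    have htk := (mem_powersetCard.1 ht).1
    ext i
    exact ⟨fun hi => (hωt i (hsk hi)).1 ((hωs i (hsk hi)).2 hi),
      fun hi => (hωs i (htk hi)).1 ((hωt i (htk hi)).2 hi)⟩
  have hsub : ∀ s ∈ powersetCard m (range k), E s ⊆ {ω | a ^ m ≤ maxProdAbs X m n ω} := by
    intro s hs ω hω
    obtain ⟨hsk, hsm⟩ := mem_powersetCard.1 hs
    simp only [E, Set.mem_iInter, Set.mem_preimage, Set.mem_ofPred_eq] at hω
    calc a ^ m = ∏ _i ∈ s, a := by rw [prod_const, hsm]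
      _ ≤ ∏ i ∈ s, |X i ω| := prod_le_prod (fun _ _ => ha) fun i hi => (hω i (hsk hi)).2 hi
      _ ≤ _ := le_maxProdAbs X hsm (hsk.trans (range_subset_range.2 hkn)) ω
  have hcompl : 1 - μ.real (X 0 ⁻¹' A) = μ.real (X 0 ⁻¹' Aᶜ) :=
    (probReal_compl_eq_one_sub (hmeas 0 hA)).symm
  calc k.choose m * μ.real (X 0 ⁻¹' A) ^ m * (1 - μ.real (X 0 ⁻¹' A)) ^ (k - m)
      = ∑ s ∈ powersetCard m (range k), μ.real (E s) := by
        rw [sum_congr rfl fun s hs => by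
          rw [measureReal_biInter_preimage_mem_iff_mem hindep hident hA (mem_powersetCard.1 hs).1,
            (mem_powersetCard.1 hs).2], sum_const, card_powersetCard, card_range, nsmul_eq_mul,
          hcompl, mul_assoc]
    _ = μ.real (⋃ s ∈ powersetCard m (range k), E s) :=
        (measureReal_biUnion_finset hdisj fun s _ => hE s).symm
    _ ≤ _ := measureReal_mono (Set.iUnion₂_subset hsub)

end IID

section Binomial

variable {m : ℕ} {q : ℝ}

lemma mul_pow_le_choose_mul_pow_mul_pow (hq0 : 0 ≤ q) (hq1 : q ≤ 1) {k : ℕ} (hk : 2 * m ≤ k)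
    (hkq : k * q ≤ 1 / 2) :
    (k * q) ^ m ≤ 2 ^ (m + 1) * m ! * (k.choose m * q ^ m * (1 - q) ^ (k - m)) := by
  have hchoose : ((k : ℝ) / 2) ^ m ≤ m ! * k.choose m := by
    have h := Nat.pow_le_choose (α := ℝ) m k
    rw [div_le_iff₀ (by positivity)] at h
    have hkm : (k : ℝ) / 2 ≤ (k + 1 - m : ℕ) := by
      rw [div_le_iff₀ two_pos]
      exact_mod_cast (by omega : k ≤ (k + 1 - m) * 2)
    calc ((k : ℝ) / 2) ^ m ≤ ((k + 1 - m : ℕ) : ℝ) ^ m := by gcongr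
      _ ≤ _ := by linarith
  have hbernoulli : 1 / 2 ≤ (1 - q) ^ (k - m) := by
    have hkm : ((k - m : ℕ) : ℝ) * q ≤ k * q := by gcongr; exact_mod_cast Nat.sub_le k m
    calc (1 : ℝ) / 2 ≤ 1 + ((k - m : ℕ) : ℝ) * (-q) := by linarith
      _ ≤ (1 + -q) ^ (k - m) := one_add_mul_le_pow (by linarith) _
      _ = (1 - q) ^ (k - m) := by ring
  calc (k * q) ^ m = 2 ^ m * (((k : ℝ) / 2) ^ m * q ^ m) * 1 := by
        rw [div_pow, mul_pow]; field_simp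
    _ ≤ 2 ^ m * (m ! * k.choose m * q ^ m) * (2 * (1 - q) ^ (k - m)) := by gcongr; linarith
    _ = _ := by ring

lemma mul_le_half_of_choose_mul_pow_le (hq0 : 0 ≤ q) (hq : q ≤ 1 / (4 * (m + 1))) {N : ℕ}
    {G : ℝ} (h : ∀ k ≤ N, k.choose m * q ^ m * (1 - q) ^ (k - m) ≤ G)
    (hG : 2 ^ (m + 1) * m ! * G < (1 / 4) ^ m) :
    N * q ≤ 1 / 2 := by
  by_contra! hN
  have hqpos : 0 < q := pos_of_mul_pos_right (by linarith) N.cast_nonneg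
  have hq_le : q ≤ 1 / 4 := hq.trans <| by
    rw [div_le_div_iff₀ (by positivity) (by norm_num)]; linarith [(m.cast_nonneg : (0 : ℝ) ≤ m)]
  set k := ⌊1 / (2 * q)⌋₊
  have hk_le : (k : ℝ) ≤ 1 / (2 * q) := Nat.floor_le (by positivity)
  have hk_gt : 1 / (2 * q) < k + 1 := Nat.lt_floor_add_one _
  have h2q : 2 * (m + 1) ≤ 1 / (2 * q) := by
    rw [le_div_iff₀ (by positivity)]
    rw [le_div_iff₀ (by positivity)] at hq
    linarith
  have hkN : k ≤ N := by
    have : 1 / (2 * q) < N := by rw [div_lt_iff₀ (by positivity)]; linarith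
    exact_mod_cast hk_le.trans this.le
  have hkm : 2 * m ≤ k := by
    have : (2 * m : ℝ) < k := by linarith
    exact_mod_cast this.le
  have hkq : k * q ≤ 1 / 2 := by
    rw [le_div_iff₀ (by positivity)] at hk_le; linarith
  have hkq' : 1 / 4 ≤ k * q := by
    rw [div_lt_iff₀ (by positivity)] at hk_gt; linarith
  refine hG.not_ge ?_
  calc ((1 : ℝ) / 4) ^ m ≤ (k * q) ^ m := by gcongr
    _ ≤ 2 ^ (m + 1) * m ! * (k.choose m * q ^ m * (1 - q) ^ (k - m)) :=
      mul_pow_le_choose_mul_pow_mul_pow hq0 (by linarith) hkm hkq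
    _ ≤ 2 ^ (m + 1) * m ! * G := by gcongr; exact h k hkN

lemma mul_mul_pow_le_sum_Ioc (hq0 : 0 ≤ q) {n : ℕ} (hn : 2 * m ≤ n + 1) {g : ℕ → ℝ}
    (h : ∀ k j, k ≤ j → j ≤ 2 * n → k.choose m * q ^ m * (1 - q) ^ (k - m) ≤ g j)
    (hg : g (2 * n) < (1 / (4 * (m + 1))) ^ m)
    (hg' : 2 ^ (m + 1) * m ! * g (2 * n) < (1 / 4) ^ m) :
    n * (n * q) ^ m ≤ 2 ^ (m + 1) * m ! * ∑ j ∈ Ioc n (2 * n), g j := by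
  have hq : q ≤ 1 / (4 * (m + 1)) := by
    have := h m (2 * n) (by omega) le_rfl
    rw [Nat.choose_self, Nat.sub_self, pow_zero, mul_one, Nat.cast_one, one_mul] at this
    exact (lt_of_pow_lt_pow_left₀ m (by positivity) (this.trans_lt hg)).le
  have hq1 : q ≤ 1 := hq.trans <| by
    rw [div_le_one (by positivity)]; linarith [(m.cast_nonneg : (0 : ℝ) ≤ m)]
  have h2n := mul_le_half_of_choose_mul_pow_le hq0 hq (fun k hk => h k (2 * n) hk le_rfl) hg'
  rw [mul_sum]
  calc (n : ℝ) * (n * q) ^ m = ∑ _j ∈ Ioc n (2 * n), (n * q) ^ m := by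
        rw [sum_const, Nat.card_Ioc, nsmul_eq_mul, two_mul, Nat.add_sub_cancel]
    _ ≤ _ := sum_le_sum fun j hj => by
        obtain ⟨hnj, hj2n⟩ := mem_Ioc.1 hj
        have hjq : j * q ≤ 1 / 2 := h2n.trans' (by gcongr)
        calc ((n : ℝ) * q) ^ m ≤ (j * q) ^ m := by gcongr
          _ ≤ 2 ^ (m + 1) * m ! * (j.choose m * q ^ m * (1 - q) ^ (j - m)) :=
            mul_pow_le_choose_mul_pow_mul_pow hq0 hq1 (by omega) hjq
          _ ≤ 2 ^ (m + 1) * m ! * g j := by gcongr; exact h j j le_rfl hj2n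

end Binomial

lemma lintegral_abs_rpow_lt_top_of_measure_le {Ω : Type*} [MeasurableSpace Ω] {μ : Measure Ω}
    [IsFiniteMeasure μ] {f : Ω → ℝ} (hf : AEMeasurable f μ) {β ρ C : ℝ} (hβ : 0 < β)
    (hβρ : β < ρ) (htail : ∀ᶠ t in atTop, μ {ω | t ≤ |f ω|} ≤ ENNReal.ofReal (C * t ^ (-ρ))) :
    ∫⁻ ω, ENNReal.ofReal (|f ω| ^ β) ∂μ < ∞ := by
  obtain ⟨T, hT⟩ := (htail.and (eventually_gt_atTop 0)).exists_forall_of_atTop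
  have hT0 : 0 < T := (hT T le_rfl).2
  rw [lintegral_rpow_eq_lintegral_meas_le_mul μ (ae_of_all _ fun ω => abs_nonneg (f ω)) hf.abs hβ,
    ← Set.Ioc_union_Ioi_eq_Ioi hT0.le]
  refine ENNReal.mul_lt_top ENNReal.ofReal_lt_top <|
    (lintegral_union_le _ _ _).trans_lt (ENNReal.add_lt_top.2 ⟨?_, ?_⟩)
  · calc ∫⁻ t in Set.Ioc 0 T, μ {ω | t ≤ |f ω|} * ENNReal.ofReal (t ^ (β - 1))
        ≤ ∫⁻ t in Set.Ioc 0 T, μ Set.univ * ENNReal.ofReal (t ^ (β - 1)) :=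
          lintegral_mono fun t => by gcongr; exact Set.subset_univ _
      _ = μ Set.univ * ∫⁻ t in Set.Ioc 0 T, ENNReal.ofReal (t ^ (β - 1)) :=
          lintegral_const_mul' _ _ (measure_ne_top _ _)
      _ < ∞ := ENNReal.mul_lt_top (measure_lt_top _ _)
          (intervalIntegral.intervalIntegrable_rpow' (by linarith)).1.lintegral_lt_top
  · calc ∫⁻ t in Set.Ioi T, μ {ω | t ≤ |f ω|} * ENNReal.ofReal (t ^ (β - 1))
        ≤ ∫⁻ t in Set.Ioi T, ENNReal.ofReal (C * t ^ (β - 1 - ρ)) :=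
          setLIntegral_mono (by fun_prop) fun t ht => by
            have ht0 : 0 < t := hT0.trans ht
            rw [sub_eq_add_neg (β - 1), rpow_add ht0, mul_comm (t ^ (β - 1)), ← mul_assoc,
              ENNReal.ofReal_mul' (rpow_nonneg ht0.le _)]
            gcongr
            exact (hT t (le_of_lt ht)).1
      _ < ∞ := ((integrableOn_Ioi_rpow_of_lt (by linarith) hT0).const_mul C).lintegral_lt_top

lemma monotone_natCast_mul_log : Monotone fun n : ℕ => (n : ℝ) * log n := by
  intro j n h
  rcases j.eq_zero_or_pos with rfl | hj
  · simpa using mul_nonneg n.cast_nonneg (log_natCast_nonneg n)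
  · have := log_natCast_nonneg j
    dsimp only
    gcongr

lemma sqrt_mul_log_le_pow {x t s ε : ℝ} {m : ℕ} (hx : 0 ≤ x) (ht : 0 ≤ t) (hε : 0 < ε)
    (hlog : log x ≤ x ^ ε) (hxt : x ≤ t ^ s) (hsε : s * (1 + ε) = 2 * m) :
    √(x * log x) ≤ t ^ m := by
  rw [← sqrt_sq (pow_nonneg ht m)]
  refine sqrt_le_sqrt ?_
  calc x * log x ≤ x * x ^ ε := by gcongr
    _ = x ^ (1 + ε) := (rpow_one_add' hx (by linarith)).symm
    _ ≤ (t ^ s) ^ (1 + ε) := by gcongr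
    _ = (t ^ m) ^ 2 := by
        rw [← rpow_mul ht, hsε, ← pow_mul, ← rpow_natCast]; push_cast; ring_nf

lemma eventually_log_natCast_le_rpow {ε : ℝ} (hε : 0 < ε) :
    ∀ᶠ j : ℕ in atTop, log j ≤ (j : ℝ) ^ ε := by
  filter_upwards [tendsto_natCast_atTop_atTop.eventually
    ((isLittleO_log_rpow_atTop hε).bound one_pos)] with j hj
  rw [one_mul, Real.norm_of_nonneg (rpow_nonneg j.cast_nonneg _)] at hj
  exact (le_abs_self _).trans hj

lemma le_mul_rpow_neg_of_mul_mul_pow_le {m : ℕ} (hm : m ≠ 0) {q K t s ρ N : ℝ} (hq : 0 ≤ q)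
    (hK : 0 ≤ K) (ht : 0 < t) (hsρ : ρ * m = s * (m + 1)) (hN : t ^ s / 4 ≤ N)
    (h : N * (N * q) ^ m ≤ K) :
    q ≤ (4 ^ (m + 1) * K) ^ ((m : ℝ)⁻¹) * t ^ (-ρ) := by
  have hpow : t ^ (s * (m + 1)) = (t ^ s) ^ (m + 1) := by
    rw [rpow_mul ht.le]; exact_mod_cast rpow_natCast _ (m + 1)
  rw [← pow_le_pow_iff_left₀ hq (by positivity) hm, mul_pow,
    rpow_inv_natCast_pow (by positivity) hm, ← rpow_natCast (t ^ (-ρ)),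
    ← rpow_mul ht.le, neg_mul, hsρ, rpow_neg ht.le, ← div_eq_mul_inv,
    le_div_iff₀ (by positivity)]
  calc q ^ m * t ^ (s * (m + 1)) = 4 ^ (m + 1) * (q ^ m * (t ^ s / 4) ^ (m + 1)) := by
        rw [hpow, div_pow]; field_simp
    _ ≤ 4 ^ (m + 1) * (q ^ m * N ^ (m + 1)) := by gcongr
    _ = 4 ^ (m + 1) * (N * (N * q) ^ m) := by ring
    _ ≤ 4 ^ (m + 1) * K := by gcongr

section Tail

variable {Ω : Type*} [MeasurableSpace Ω] {μ : Measure Ω} [IsProbabilityMeasure μ]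
  {X : ℕ → Ω → ℝ}

noncomputable def exceedanceProb (μ : Measure Ω) (X : ℕ → Ω → ℝ) (m n : ℕ) : ℝ :=
  μ.real {ω | √(n * log n) ≤ maxProdAbs X m n ω}

lemma mul_mul_measureReal_pow_le_sum_exceedanceProb (hmeas : ∀ i, Measurable (X i))
    (hindep : iIndepFun X μ) (hident : ∀ i, IdentDistrib (X i) (X 0) μ μ) {m n : ℕ}
    (hn : 2 * m ≤ n + 1) {t : ℝ} (ht : 0 ≤ t) (hthr : √((2 * n : ℕ) * log (2 * n : ℕ)) ≤ t ^ m)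
    (hg : exceedanceProb μ X m (2 * n) < (1 / (4 * (m + 1))) ^ m)
    (hg' : 2 ^ (m + 1) * m ! * exceedanceProb μ X m (2 * n) < (1 / 4) ^ m) :
    n * (n * μ.real {ω | t ≤ |X 0 ω|}) ^ m ≤
      2 ^ (m + 1) * m ! * ∑ j ∈ Ioc n (2 * n), exceedanceProb μ X m j := by
  refine mul_mul_pow_le_sum_Ioc measureReal_nonneg hn (fun k j hkj hj => ?_) hg hg'
  refine (choose_mul_pow_le_measureReal_maxProdAbs hmeas hindep hident ht hkj).trans ?_
  exact measureReal_mono <| Set.ofPred_subset_ofPred.2 fun ω hω =>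
    ((sqrt_le_sqrt (monotone_natCast_mul_log hj)).trans hthr).trans hω

lemma exists_eventually_measure_le_rpow_neg (hmeas : ∀ i, Measurable (X i)) (hindep : iIndepFun X μ)
    (hident : ∀ i, IdentDistrib (X i) (X 0) μ μ) {m : ℕ} (hm : 1 ≤ m)
    (hsum : Summable (exceedanceProb μ X m)) {ρ : ℝ} (hρ0 : 0 < ρ) (hρ : ρ < 2 * (m + 1)) :
    ∃ C, ∀ᶠ t in atTop, μ {ω | t ≤ |X 0 ω|} ≤ ENNReal.ofReal (C * t ^ (-ρ)) := by
  set g := exceedanceProb μ X m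
  set K := 2 ^ (m + 1) * m ! * ∑' j, g j
  have hK0 : 0 ≤ K := by
    have : 0 ≤ ∑' j, g j := tsum_nonneg fun j => measureReal_nonneg
    positivity
  -- With `n t ≈ t ^ s / 2`, the relation `s (1 + ε) = 2m` yields `√(2n log 2n) ≤ t ^ m` once
  -- `log (2n) ≤ (2n) ^ ε`, and `ρ m = s (m + 1)` turns `n ^ (-(m+1))` into `t ^ (-ρ m)`.
  set ε := 2 * (m + 1) / ρ - 1
  set s := ρ * m / (m + 1)
  have hε : 0 < ε := by rw [sub_pos, one_lt_div hρ0]; exact hρ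
  have hs : 0 < s := by positivity
  have hsε : s * (1 + ε) = 2 * m := by simp only [s, ε]; field_simp; ring
  have hsρ : ρ * m = s * (m + 1) := by simp only [s]; field_simp
  set n : ℝ → ℕ := fun t => ⌊t ^ s / 2⌋₊
  have h2n : Tendsto (fun t => 2 * n t) atTop atTop :=
    tendsto_atTop_mono (fun t => Nat.le_mul_of_pos_left _ two_pos)
      (tendsto_nat_floor_atTop.comp ((tendsto_rpow_atTop hs).atTop_div_const two_pos))
  have hsmall : ∀ᶠ j : ℕ in atTop, g j < (1 / (4 * (m + 1))) ^ m ∧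
      2 ^ (m + 1) * m ! * g j < (1 / 4) ^ m ∧ log j ≤ (j : ℝ) ^ ε := by
    have hg0 := hsum.tendsto_atTop_zero
    have hcg0 : Tendsto (fun j => 2 ^ (m + 1) * m ! * g j) atTop (𝓝 0) := by
      simpa using hg0.const_mul (2 ^ (m + 1) * m ! : ℝ)
    exact (hg0.eventually (gt_mem_nhds (by positivity))).and
      ((hcg0.eventually (gt_mem_nhds (by positivity))).and (eventually_log_natCast_le_rpow hε))
  refine ⟨(4 ^ (m + 1) * K) ^ ((m : ℝ)⁻¹), ?_⟩
  filter_upwards [h2n.eventually hsmall, h2n.eventually (eventually_ge_atTop (4 * m)),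
    (tendsto_rpow_atTop hs).eventually_ge_atTop 4, eventually_gt_atTop 0]
    with t ⟨hg, hg', hlog⟩ hnm hx ht
  have hn_gt : t ^ s / 2 < n t + 1 := Nat.lt_floor_add_one _
  have hthr : √((2 * n t : ℕ) * log (2 * n t : ℕ)) ≤ t ^ m := by
    refine sqrt_mul_log_le_pow (by positivity) ht.le hε hlog ?_ hsε
    have hn_le : (n t : ℝ) ≤ t ^ s / 2 := Nat.floor_le (by positivity)
    push_cast
    linarith
  have hK : (n t : ℝ) * (n t * μ.real {ω | t ≤ |X 0 ω|}) ^ m ≤ K :=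
    (mul_mul_measureReal_pow_le_sum_exceedanceProb hmeas hindep hident (by omega) ht.le
      hthr hg hg').trans (mul_le_mul_of_nonneg_left
        (hsum.sum_le_tsum _ fun j _ => measureReal_nonneg) (by positivity))
  rw [← ofReal_measureReal]
  exact ENNReal.ofReal_le_ofReal <| le_mul_rpow_neg_of_mul_mul_pow_le (by omega)
    measureReal_nonneg hK0 ht hsρ (by linarith) hK

end Tail

/-- **Corollary.** For i.i.d. `X_{1,i}` and fixed `m ≥ 1`, if
`∑_{n≥m} P(max_{1≤i₁<⋯<i_m≤n} ∏_h |X_{1,i_h}| ≥ √(n ln n)) < ∞`, then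
`E (|X_{1,1}|^β) < ∞` for every real `β` with `0 ≤ β < 2(m+1)`. -/
theorem stmt_7 {Ω : Type*} [MeasurableSpace Ω] (μ : Measure Ω) [IsProbabilityMeasure μ]
    (X : ℕ → Ω → ℝ) (hmeas : ∀ i, Measurable (X i))
    (hindep : iIndepFun X μ)
    (hident : ∀ i, IdentDistrib (X i) (X 0) μ μ)
    (m : ℕ) (hm : 1 ≤ m)
    (hsum : (∑' k : ℕ, μ {ω |
      Real.sqrt ((k + m : ℕ) * Real.log (k + m : ℕ)) ≤ maxProdAbs X m (k + m) ω}) < ⊤) :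
    ∀ β : ℝ, 0 ≤ β → β < 2 * (m + 1) →
      (∫⁻ ω, ENNReal.ofReal (|X 0 ω| ^ β) ∂μ) < ⊤ := by
  intro β hβ0 hβ
  rcases hβ0.eq_or_lt with rfl | hβpos
  · simp
  have hsum' : Summable (exceedanceProb μ X m) :=
    (summable_nat_add_iff m).1 (ENNReal.summable_toReal hsum.ne)
  obtain ⟨ρ, hβρ, hρ⟩ := exists_between hβ
  obtain ⟨C, hC⟩ := exists_eventually_measure_le_rpow_neg hmeas hindep hident hm hsum'
    (hβpos.trans hβρ) hρ
  exact lintegral_abs_rpow_lt_top_of_measure_le (hmeas 0).aemeasurable hβpos hβρ hC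
end
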